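/- arXiv:1607.06985 — 6 statements merged into one kernel-verified Lean document; each statement's English description precedes it below -/
import Mathlib

section
/- Let F be a field and n a natural number. For a 3-element subset f = {i,j,k} of Fin n with i < j < k, define the boundary chain ∂f to be the finitely supported function from 2-element subsets of Fin n to F taking value 1 at {j,k}, value -1 at {i,k}, value 1 at {i,j}, and 0 elsewhere. For a set Y of 3-element subsets of Fin n, define the F-shadow SH(Y;F) to be the set of 3-element subsets f such that ∂f lies in the F-linear span of {∂g : g ∈ Y}. Then SH(Y;F) is tetra-closed: for every 4-element subset s of Fin n, whenever three of the four 3-element subsets of s belong to SH(Y;F), so does the fourth. -/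
/-- The boundary chain of a triple `f = {i, j, k}` with `i < j < k`: the
(finitely supported) function on 2-element subsets of `Fin n` taking the
value `1` at `{j, k}`, `-1` at `{i, k}`, `1` at `{i, j}` and `0` elsewhere.
(For each `x ∈ f`, the face `f.erase x` receives the sign `(-1)^r` where
`r` is the number of elements of `f` smaller than `x`.) -/
noncomputable def bdry (F : Type*) [Field F] {n : ℕ} (f : Finset (Fin n)) :
    Finset (Fin n) → F :=
  fun e => ∑ x ∈ f,
    if f.erase x = e then (-1 : F) ^ ((f.filter (fun y => y < x)).card) else 0

/-- The `F`-shadow of a set `Y` of triples: all triples `f` whose boundary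
chain lies in the `F`-linear span of the boundary chains of members of `Y`. -/
noncomputable def shadow (F : Type*) [Field F] {n : ℕ}
    (Y : Set (Finset (Fin n))) : Set (Finset (Fin n)) :=
  {f | f.card = 3 ∧ bdry F f ∈ Submodule.span F (bdry F '' Y)}

/-! The boundaries of the four faces of a tetrahedron `s` satisfy `∑ ± ∂(s.erase x) = 0`
(this is `∂ ∂ = 0`), and all coefficients are units, so the boundary of any one face is a
combination of the boundaries of the other three. -/

open Finset

theorem Submodule.mem_of_sum_smul_eq_zero {ι R M : Type*} [Ring R] [AddCommGroup M]
    [Module R M] {p : Submodule R M} {s : Finset ι} {c : ι → R} {v : ι → M} {i : ι}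
    (hi : i ∈ s) (hc : IsUnit (c i)) (hsum : ∑ j ∈ s, c j • v j = 0)
    (hv : ∀ j ∈ s, j ≠ i → v j ∈ p) : v i ∈ p := by
  classical
  rw [← add_sum_erase s _ hi] at hsum
  have hrest : ∑ j ∈ s.erase i, c j • v j ∈ p :=
    sum_mem fun j hj => p.smul_mem _ (hv j (mem_of_mem_erase hj) (ne_of_mem_erase hj))
  rw [← p.smul_mem_iff_of_isUnit hc, eq_neg_of_add_eq_zero_left hsum]
  exact neg_mem hrest

theorem Finset.exists_erase_eq_of_subset_of_card_add_one {α : Type*} [DecidableEq α]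
    {s t : Finset α} (hts : t ⊆ s) (hcard : #t + 1 = #s) : ∃ a ∈ s, s.erase a = t := by
  obtain ⟨a, ha, rfl⟩ := exists_eq_insert_iff.2 ⟨hts, hcard⟩
  exact ⟨a, mem_insert_self a t, erase_insert ha⟩

section FaceSign

variable {α : Type*} [LinearOrder α] (R : Type*) [CommRing R]

def faceSign (s : Finset α) (x : α) : R := (-1) ^ #{y ∈ s | y < x}

theorem card_filter_lt_erase_add {s : Finset α} {x : α} (hx : x ∈ s) (z : α) :
    #{y ∈ s.erase x | y < z} + (if x < z then 1 else 0) = #{y ∈ s | y < z} := by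
  rw [filter_erase]
  split_ifs with h
  · exact card_erase_add_one (mem_filter.2 ⟨hx, h⟩)
  · rw [erase_eq_of_notMem (by simp [h]), add_zero]

theorem faceSign_mul_faceSign_erase_of_lt {s : Finset α} {x z : α} (hx : x ∈ s) (hz : z ∈ s)
    (hxz : x < z) :
    faceSign R s x * faceSign R (s.erase x) z = -(faceSign R s z * faceSign R (s.erase z) x) := by
  have hz' := card_filter_lt_erase_add hx z
  have hx' := card_filter_lt_erase_add hz x
  rw [if_pos hxz] at hz'
  rw [if_neg hxz.not_gt, add_zero] at hx'
  simp only [faceSign, ← hz', ← hx', pow_succ]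
  ring

theorem faceSign_mul_faceSign_erase_antisymm {s : Finset α} {x z : α} (hx : x ∈ s)
    (hz : z ∈ s) (hxz : x ≠ z) :
    faceSign R s x * faceSign R (s.erase x) z = -(faceSign R s z * faceSign R (s.erase z) x) := by
  rcases hxz.lt_or_gt with h | h
  · exact faceSign_mul_faceSign_erase_of_lt R hx hz h
  · rw [faceSign_mul_faceSign_erase_of_lt R hz hx h, neg_neg]

theorem isUnit_faceSign (s : Finset α) (x : α) : IsUnit (faceSign R s x) :=
  isUnit_neg_one.pow _

end FaceSign

theorem bdry_apply (F : Type*) [Field F] {n : ℕ} (f e : Finset (Fin n)) :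
    bdry F f e = ∑ x ∈ f, if f.erase x = e then faceSign F f x else 0 :=
  rfl

/-- `∂ ∂ = 0`: the faces `s.erase x` and `s.erase z` both contain the codimension-two face
`(s.erase x).erase z = (s.erase z).erase x`, and it enters with opposite signs. -/
theorem sum_faceSign_smul_bdry_erase (F : Type*) [Field F] {n : ℕ} (s : Finset (Fin n)) :
    ∑ x ∈ s, faceSign F s x • bdry F (s.erase x) = 0 := by
  funext e
  simp only [Finset.sum_apply, Pi.smul_apply, smul_eq_mul, Pi.zero_apply, bdry_apply, mul_sum]
  rw [sum_sigma']
  refine sum_involution (fun p _ => ⟨p.2, p.1⟩) ?_ ?_ ?_ (fun _ _ => rfl)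
  · rintro ⟨x, z⟩ hp
    simp only [mem_sigma, mem_erase] at hp
    obtain ⟨hx, hzx, hz⟩ := hp
    have hsign := faceSign_mul_faceSign_erase_antisymm F hx hz (Ne.symm hzx)
    rw [erase_right_comm (a := z)]
    split_ifs
    · rw [hsign, neg_add_cancel]
    · simp
  · rintro ⟨x, z⟩ hp _ h
    exact (mem_erase.1 (mem_sigma.1 hp).2).1 (congrArg Sigma.fst h)
  · rintro ⟨x, z⟩ hp
    simp only [mem_sigma, mem_erase] at hp ⊢
    exact ⟨hp.2.2, Ne.symm hp.2.1, hp.1⟩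

theorem shadow_tetraClosed_general (F : Type*) [Field F] (n : ℕ)
    (Y : Set (Finset (Fin n)))
    (s : Finset (Fin n)) (hs : s.card = 4)
    (f : Finset (Fin n)) (hf : f ∈ s.powersetCard 3)
    (hthree : ∀ g ∈ s.powersetCard 3, g ≠ f → g ∈ shadow F Y) :
    f ∈ shadow F Y := by
  obtain ⟨hfs, hfc⟩ := mem_powersetCard.1 hf
  obtain ⟨x₀, hx₀, rfl⟩ := exists_erase_eq_of_subset_of_card_add_one hfs (by rw [hfc, hs])
  refine ⟨hfc, Submodule.mem_of_sum_smul_eq_zero (v := fun x => bdry F (s.erase x)) hx₀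
    (isUnit_faceSign F s x₀) (sum_faceSign_smul_bdry_erase F s)
    fun x hx hxx₀ => (hthree _ ?_ ?_).2⟩
  · exact mem_powersetCard.2 ⟨erase_subset x s, by rw [card_erase_of_mem hx, hs]⟩
  · exact fun h => hxx₀ (erase_injOn s hx hx₀ h)

/-- The `F`-shadow is tetra-closed: for every 4-element subset `s` of `Fin n`,
if three of the four 3-element subsets of `s` lie in the shadow, so does the
fourth. -/
theorem shadow_tetraClosed (F : Type*) [Field F] (n : ℕ)
    (Y : Set (Finset (Fin n))) (hY : ∀ g ∈ Y, g.card = 3)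
    (s : Finset (Fin n)) (hs : s.card = 4)
    (f : Finset (Fin n)) (hf : f ∈ s.powersetCard 3)
    (hthree : ∀ g ∈ s.powersetCard 3, g ≠ f → g ∈ shadow F Y) :
    f ∈ shadow F Y :=
  shadow_tetraClosed_general F n Y s hs f hf hthree
end

section
/- Fix n ∈ ℕ and a tetra-closed set G of triples of Fin n, and a threshold t ∈ ℕ with n > 3 + 3t. Let f = {x,y,z} be a triple such that each of its three edges {x,y}, {x,z}, {y,z} is t-good (i.e., each is contained in at most t bad triples). Then f ∈ G. -/
/-- A set `G` of triples of `Fin n` is tetra-closed if for every 4-element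
subset `s` of `Fin n`, whenever three of the four 3-element subsets of `s`
belong to `G`, so does the fourth. -/
def TetraClosed {n : ℕ} (G : Finset (Finset (Fin n))) : Prop :=
  ∀ s : Finset (Fin n), s.card = 4 →
    ∀ f ∈ s.powersetCard 3, (∀ g ∈ s.powersetCard 3, g ≠ f → g ∈ G) → f ∈ G

/-- The bad triples (triples of `Fin n` not in `G`) containing the edge `e`. -/
def badTriplesOn {n : ℕ} (G : Finset (Finset (Fin n))) (e : Finset (Fin n)) :
    Finset (Finset (Fin n)) :=
  ((Finset.univ : Finset (Fin n)).powersetCard 3).filter (fun f => e ⊆ f ∧ f ∉ G)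

/-!
Among the `n > 3 + 3t` vertices, at most `3` lie in `{x, y, z}` and at most `t` are apexes of a bad
triple over each of the three edges, so some vertex `v` is none of these. The cone triples
`{v, x, y}`, `{v, x, z}`, `{v, y, z}` are then good, and tetra-closedness of `{v, x, y, z}` yields
`{x, y, z} ∈ G`.
-/

open Finset

variable {n : ℕ} {G : Finset (Finset (Fin n))}

lemma TetraClosed.erase_mem (hG : TetraClosed G) {s : Finset (Fin n)} (hs : s.card = 4)
    {w : Fin n} (hw : w ∈ s) (h : ∀ u ∈ s, u ≠ w → s.erase u ∈ G) :
    s.erase w ∈ G := by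
  refine hG s hs _ (mem_powersetCard.2 ⟨erase_subset w s, by rw [card_erase_of_mem hw, hs]⟩) ?_
  intro g hg hgw
  obtain ⟨hgs, hg3⟩ := mem_powersetCard.1 hg
  have hcov : g ⋖ s :=
    covBy_iff_card_sdiff_eq_one.2 ⟨hgs, by rw [card_sdiff_of_subset hgs, hs, hg3]⟩
  obtain ⟨u, hu, rfl⟩ := hcov.exists_finset_erase
  exact h u hu (by rintro rfl; exact hgw rfl)

lemma TetraClosed.mem_of_cone (hG : TetraClosed G) {v x y z : Fin n}
    (hxy : x ≠ y) (hxz : x ≠ z) (hyz : y ≠ z) (hv : v ∉ ({x, y, z} : Finset (Fin n)))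
    (hvxy : insert v {x, y} ∈ G) (hvxz : insert v {x, z} ∈ G) (hvyz : insert v {y, z} ∈ G) :
    ({x, y, z} : Finset (Fin n)) ∈ G := by
  have hcard : (insert v {x, y, z} : Finset (Fin n)).card = 4 := by
    rw [card_insert_of_notMem hv, card_insert_of_notMem (by simp [hxy, hxz]),
      card_pair hyz]
  simpa [erase_insert hv] using hG.erase_mem hcard (mem_insert_self v _) fun u hu huv => by
    simp only [mem_insert, mem_singleton, huv, false_or] at hu
    rcases hu with rfl | rfl | rfl
    · rwa [erase_insert_of_ne huv.symm, erase_insert (by simp [hxy, hxz])]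
    · rwa [erase_insert_of_ne huv.symm, erase_insert_of_ne hxy, erase_insert (by simp [hyz])]
    · rwa [erase_insert_of_ne huv.symm, erase_insert_of_ne hxz, erase_insert_of_ne hyz,
        erase_singleton]

def badApexes (G : Finset (Finset (Fin n))) (e : Finset (Fin n)) : Finset (Fin n) :=
  univ.filter fun v => v ∉ e ∧ insert v e ∉ G

lemma card_badApexes_le {e : Finset (Fin n)} (he : e.card = 2) :
    (badApexes G e).card ≤ (badTriplesOn G e).card := by
  refine card_le_card_of_injOn (insert · e) (fun v hv => ?_) fun v hv w hw hvw => ?_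
  · simp only [badApexes, coe_filter, mem_univ, true_and, Set.mem_ofPred_eq] at hv
    simp only [badTriplesOn, coe_filter, mem_powersetCard_univ, Set.mem_ofPred_eq]
    exact ⟨by rw [card_insert_of_notMem hv.1, he], subset_insert v e, hv.2⟩
  · simp only [badApexes, coe_filter, mem_univ, true_and, Set.mem_ofPred_eq] at hv
    exact (insert_inj hv.1).1 hvw

theorem triple_with_good_edges_mem_general (n t : ℕ) (G : Finset (Finset (Fin n)))
    (hG : TetraClosed G)
    (hn : n > 3 + 3 * t)
    (x y z : Fin n) (hxy : x ≠ y) (hxz : x ≠ z) (hyz : y ≠ z)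
    (hexy : (badTriplesOn G {x, y}).card ≤ t)
    (hexz : (badTriplesOn G {x, z}).card ≤ t)
    (heyz : (badTriplesOn G {y, z}).card ≤ t) :
    ({x, y, z} : Finset (Fin n)) ∈ G := by
  set B := badApexes G {x, y} ∪ badApexes G {x, z} ∪ badApexes G {y, z} ∪ {x, y, z}
  have hB : B.card < (univ : Finset (Fin n)).card := calc
    B.card ≤ (badApexes G {x, y}).card + (badApexes G {x, z}).card
        + (badApexes G {y, z}).card + ({x, y, z} : Finset (Fin n)).card := by
      grw [card_union_le, card_union_le, card_union_le]
    _ ≤ t + t + t + 3 := by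
      gcongr
      · exact (card_badApexes_le (card_pair hxy)).trans hexy
      · exact (card_badApexes_le (card_pair hxz)).trans hexz
      · exact (card_badApexes_le (card_pair hyz)).trans heyz
      · exact card_le_three
    _ < (univ : Finset (Fin n)).card := by rw [card_univ, Fintype.card_fin]; omega
  obtain ⟨v, -, hvB⟩ := exists_mem_notMem_of_card_lt_card hB
  simp only [B, badApexes, mem_union, mem_filter, mem_univ, true_and, not_or, not_and,
    not_not] at hvB
  obtain ⟨⟨⟨hvxy, hvxz⟩, hvyz⟩, hv⟩ := hvB
  refine hG.mem_of_cone hxy hxz hyz hv (hvxy ?_) (hvxz ?_) (hvyz ?_) <;>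
    simp only [mem_insert, mem_singleton] at hv ⊢ <;> tauto

/-- Claim 3.2: if `n > 3 + 3t`, `G` is tetra-closed, and the three edges of a
triple `{x, y, z}` are each `t`-good (contained in at most `t` bad triples),
then `{x, y, z} ∈ G`. -/
theorem triple_with_good_edges_mem (n t : ℕ) (G : Finset (Finset (Fin n)))
    (hGtriples : ∀ f ∈ G, f.card = 3) (hG : TetraClosed G)
    (hn : n > 3 + 3 * t)
    (x y z : Fin n) (hxy : x ≠ y) (hxz : x ≠ z) (hyz : y ≠ z)
    (hexy : (badTriplesOn G {x, y}).card ≤ t)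
    (hexz : (badTriplesOn G {x, z}).card ≤ t)
    (heyz : (badTriplesOn G {y, z}).card ≤ t) :
    ({x, y, z} : Finset (Fin n)) ∈ G :=
  triple_with_good_edges_mem_general n t G hG hn x y z hxy hxz hyz hexy hexz heyz
end

section
/- Fix n ∈ ℕ, a set G of triples of Fin n, and a threshold t ∈ ℕ. If the number of bad triples (triples of Fin n not in G) is at most B, then (t+1) times the number of t-bad edges is at most 3B. -/
/-- The `t`-bad edges: the 2-element subsets of `Fin n` contained in more than
`t` bad triples. -/
def tBadEdges {n : ℕ} (G : Finset (Finset (Fin n))) (t : ℕ) :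
    Finset (Finset (Fin n)) :=
  ((Finset.univ : Finset (Fin n)).powersetCard 2).filter
    (fun e => t < (badTriplesOn G e).card)

open Finset

theorem card_filter_subset_le_choose {α : Type*} [DecidableEq α] {k : ℕ} {E : Finset (Finset α)}
    (hE : ∀ e ∈ E, #e = k) (f : Finset α) : #{e ∈ E | e ⊆ f} ≤ (#f).choose k := by
  rw [← card_powersetCard]
  refine card_le_card fun e he => ?_
  rw [mem_filter] at he
  exact mem_powersetCard.2 ⟨he.2, hE e he.1⟩

section

variable {n : ℕ} {G : Finset (Finset (Fin n))}

theorem mem_tBadEdges {t : ℕ} {e : Finset (Fin n)} :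
    e ∈ tBadEdges G t ↔ #e = 2 ∧ t < #(badTriplesOn G e) := by
  simp [tBadEdges]

theorem bipartiteAbove_subset_eq_badTriplesOn (e : Finset (Fin n)) :
    ((univ.powersetCard 3).filter (· ∉ G)).bipartiteAbove (· ⊆ ·) e = badTriplesOn G e := by
  ext f
  simp [bipartiteAbove, badTriplesOn, and_comm, and_assoc]

end

theorem count_bad_edges_general (n t B : ℕ) (G : Finset (Finset (Fin n)))
    (hB : (((Finset.univ : Finset (Fin n)).powersetCard 3).filter
        (fun f => f ∉ G)).card ≤ B) :
    (t + 1) * (tBadEdges G t).card ≤ 3 * B := by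
  set badTriples := ((Finset.univ : Finset (Fin n)).powersetCard 3).filter (fun f => f ∉ G)
  have incidences : #(tBadEdges G t) * (t + 1) ≤ #badTriples * Nat.choose 3 2 := by
    refine card_mul_le_card_mul (· ⊆ ·) (fun e he => ?_) (fun f hf => ?_)
    · rw [bipartiteAbove_subset_eq_badTriplesOn]
      exact (mem_tBadEdges.1 he).2
    · rw [← (mem_powersetCard.1 (mem_filter.1 hf).1).2]
      exact card_filter_subset_le_choose (fun e he => (mem_tBadEdges.1 he).1) f
  calc (t + 1) * #(tBadEdges G t) = #(tBadEdges G t) * (t + 1) := mul_comm _ _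
    _ ≤ #badTriples * 3 := incidences
    _ ≤ 3 * B := by rw [mul_comm]; exact Nat.mul_le_mul_left 3 hB

/-- Claim 3.4(1), first part: if there are at most `B` bad triples, then
`(t+1)` times the number of `t`-bad edges is at most `3B`. -/
theorem count_bad_edges (n t B : ℕ) (G : Finset (Finset (Fin n)))
    (hGtriples : ∀ f ∈ G, f.card = 3)
    (hB : (((Finset.univ : Finset (Fin n)).powersetCard 3).filter
        (fun f => f ∉ G)).card ≤ B) :
    (t + 1) * (tBadEdges G t).card ≤ 3 * B :=
  count_bad_edges_general n t B G hB
end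

section
/- Fix n ∈ ℕ and a tetra-closed set G of triples of Fin n. Let v be a vertex and let x_0, x_1, ..., x_s (s ≥ 1) be pairwise distinct vertices, all distinct from v, such that {v, x_i, x_{i+1}} ∈ G for all 0 ≤ i ≤ s−1 and {x_i, x_{i+1}, x_s} ∈ G for all 0 ≤ i ≤ s−2. Then {v, x_0, x_s} ∈ G. -/
open Finset

lemma Finset.exists_eq_erase_of_mem_powersetCard {α : Type*} [DecidableEq α] {s t : Finset α}
    {k : ℕ} (hs : s.card = k + 1) (ht : t ∈ s.powersetCard k) : ∃ a ∈ s, s.erase a = t := by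
  rw [mem_powersetCard] at ht
  refine covBy_iff_exists_erase.1 (covBy_iff_card_sdiff_eq_one.2 ⟨ht.1, ?_⟩)
  rw [card_sdiff_of_subset ht.1, hs, ht.2, Nat.add_sub_cancel_left]

namespace TetraClosed

variable {n : ℕ} {G : Finset (Finset (Fin n))}

theorem erase_mem_s9 (hG : TetraClosed G) {s : Finset (Fin n)} (hs : s.card = 4) {a : Fin n}
    (ha : a ∈ s) (h : ∀ b ∈ s, b ≠ a → s.erase b ∈ G) : s.erase a ∈ G := by
  refine hG s hs _ (mem_powersetCard.2 ⟨erase_subset a s, by rw [card_erase_of_mem ha, hs]⟩) ?_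
  intro t ht hta
  obtain ⟨b, hb, rfl⟩ := exists_eq_erase_of_mem_powersetCard hs ht
  exact h b hb (by rintro rfl; exact hta rfl)

theorem mem_of_three_faces (hG : TetraClosed G) {a b c d : Fin n} (hab : a ≠ b)
    (hac : a ≠ c) (had : a ≠ d) (hbc : b ≠ c) (hbd : b ≠ d) (hcd : c ≠ d)
    (habc : {a, b, c} ∈ G) (hacd : {a, c, d} ∈ G) (hbcd : {b, c, d} ∈ G) : {a, b, d} ∈ G := by
  have hcard : ({a, b, c, d} : Finset (Fin n)).card = 4 := by
    simp [card_insert_of_notMem, *]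
  have h := hG.erase_mem_s9 hcard (a := c) (by simp) ?_
  · simpa [erase_insert_of_ne, *] using h
  intro e he hec
  simp only [mem_insert, mem_singleton] at he
  rcases he with rfl | rfl | rfl | rfl
  · simp [*]
  · simp [erase_insert_of_ne, *]
  · exact absurd rfl hec
  · simp [erase_insert_of_ne, *]

theorem triangle_mem_of_path (hG : TetraClosed G) {v : Fin n} {x : ℕ → Fin n} {s : ℕ}
    (hx : Set.InjOn x (Set.Iic s)) (hv : ∀ i ≤ s, x i ≠ v)
    (hpath : ∀ i, i + 1 ≤ s → {v, x i, x (i + 1)} ∈ G)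
    (htri : ∀ i, i + 2 ≤ s → {x i, x (i + 1), x s} ∈ G) {i : ℕ} (hi : i < s) :
    {v, x i, x s} ∈ G := by
  induction Nat.le_sub_one_of_lt hi using Nat.decreasingInduction with
  | self => simpa [Nat.sub_add_cancel (Nat.one_le_of_lt hi)] using hpath (s - 1) (by omega)
  | of_succ i hi' ih =>
    have hne {j k : ℕ} (hj : j ≤ s) (hk : k ≤ s) (hjk : j ≠ k) : x j ≠ x k :=
      hx.ne (Set.mem_Iic.2 hj) (Set.mem_Iic.2 hk) hjk
    exact hG.mem_of_three_faces (hv i (by omega)).symm (hv (i + 1) (by omega)).symm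
      (hv s le_rfl).symm (hne (by omega) (by omega) (by omega)) (hne (by omega) le_rfl (by omega))
      (hne (by omega) le_rfl (by omega)) (hpath i (by omega)) (ih (by omega)) (htri i (by omega))

end TetraClosed

theorem triangulation_along_path_general (n s : ℕ) (G : Finset (Finset (Fin n)))
    (hG : TetraClosed G) (hs : 1 ≤ s)
    (v : Fin n) (x : ℕ → Fin n)
    (hinj : ∀ i ≤ s, ∀ j ≤ s, x i = x j → i = j)
    (hv : ∀ i ≤ s, x i ≠ v)
    (hpath : ∀ i, i + 1 ≤ s → ({v, x i, x (i + 1)} : Finset (Fin n)) ∈ G)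
    (htri : ∀ i, i + 2 ≤ s → ({x i, x (i + 1), x s} : Finset (Fin n)) ∈ G) :
    ({v, x 0, x s} : Finset (Fin n)) ∈ G :=
  hG.triangle_mem_of_path (fun i hi j hj h ↦ hinj i hi j hj h) hv hpath htri hs

/-- Triangulation along a path (Figure 2 in the proof of Lemma 3.8): if `G`
is tetra-closed, `v, x₀, x₁, …, x_s` (with `s ≥ 1`) are pairwise distinct
vertices, `{v, xᵢ, xᵢ₊₁} ∈ G` for all `0 ≤ i ≤ s − 1` and
`{xᵢ, xᵢ₊₁, x_s} ∈ G` for all `0 ≤ i ≤ s − 2`, then `{v, x₀, x_s} ∈ G`. -/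
theorem triangulation_along_path (n s : ℕ) (G : Finset (Finset (Fin n)))
    (hGtriples : ∀ f ∈ G, f.card = 3) (hG : TetraClosed G) (hs : 1 ≤ s)
    (v : Fin n) (x : ℕ → Fin n)
    (hinj : ∀ i ≤ s, ∀ j ≤ s, x i = x j → i = j)
    (hv : ∀ i ≤ s, x i ≠ v)
    (hpath : ∀ i, i + 1 ≤ s → ({v, x i, x (i + 1)} : Finset (Fin n)) ∈ G)
    (htri : ∀ i, i + 2 ≤ s → ({x i, x (i + 1), x s} : Finset (Fin n)) ∈ G) :
    ({v, x 0, x s} : Finset (Fin n)) ∈ G :=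
  triangulation_along_path_general n s G hG hs v x hinj hv hpath htri
end

section
/- Fix n ∈ ℕ, a tetra-closed set G of triples of Fin n, and thresholds t, s ∈ ℕ with n > 3 + 3t. Suppose that the number of s-bad vertices is at most a, and the number of t-bad edges both of whose endpoints are s-good is at most b. Then there exists a subset W of Fin n with |W| ≥ n − a − 2b such that every 3-element subset of W belongs to G. -/
/-- The number of `t`-bad edges containing the vertex `v`. -/
def badEdgeDegree {n : ℕ} (G : Finset (Finset (Fin n))) (t : ℕ) (v : Fin n) : ℕ :=
  ((tBadEdges G t).filter (fun e => v ∈ e)).card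

/-!
A triple `f` all of whose edges are `t`-good is good: each of its three edges lies in at most
`t` bad triples, so as `n - 3 > 3t` some vertex `w ∉ f` makes all three triples `w ∪ e`,
`e ⊆ f`, good, and tetra-closedness of `f ∪ {w}` forces `f` into `G`. Removing the `s`-bad
vertices and both endpoints of every `t`-bad edge between `s`-good vertices leaves a set all of
whose edges are `t`-good: a `t`-bad edge there would have `s`-good endpoints, which were removed.
-/

open Finset

variable {n : ℕ} {G : Finset (Finset (Fin n))}

theorem TetraClosed.mem_of_forall_insert_mem (hG : TetraClosed G) {f : Finset (Fin n)}
    (hf : #f = 3) {w : Fin n} (hw : w ∉ f) (hgood : ∀ e ∈ f.powersetCard 2, insert w e ∈ G) :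
    f ∈ G := by
  have hsides : (insert w f).powersetCard 3 = {f} ∪ (f.powersetCard 2).image (insert w) := by
    rw [powersetCard_succ_insert hw, show Nat.succ 2 = #f from hf.symm, powersetCard_self]
  refine hG (insert w f) (by rw [card_insert_of_notMem hw, hf]) f (by simp [hsides]) ?_
  intro g hg hgf
  rw [hsides, mem_union, mem_singleton, mem_image] at hg
  obtain ⟨e, he, rfl⟩ := hg.resolve_left hgf
  exact hgood e he

theorem card_filter_insert_notMem_le_card_badTriplesOn {e X : Finset (Fin n)} (he : #e = 2)
    (hX : Disjoint X e) : #{w ∈ X | insert w e ∉ G} ≤ #(badTriplesOn G e) := by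
  have hwe : ∀ w ∈ X, w ∉ e := fun w hw => disjoint_left.1 hX hw
  refine card_le_card_of_injOn (insert · e) (fun w hw => ?_) (fun w hw w' hw' h => ?_)
  · rw [coe_filter] at hw
    simp only [badTriplesOn, coe_filter, mem_powersetCard, Set.mem_ofPred_eq]
    exact ⟨⟨subset_univ _, by rw [card_insert_of_notMem (hwe w hw.1), he]⟩,
      subset_insert w e, hw.2⟩
  · rw [coe_filter] at hw
    exact (insert_inj (hwe w hw.1)).1 h

theorem exists_forall_insert_mem_of_card_badTriplesOn_le {t : ℕ} (hn : n > 3 + 3 * t)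
    {f : Finset (Fin n)} (hf : #f = 3)
    (hedges : ∀ e ⊆ f, #e = 2 → #(badTriplesOn G e) ≤ t) :
    ∃ w ∉ f, ∀ e ∈ f.powersetCard 2, insert w e ∈ G := by
  set spoilers := (f.powersetCard 2).biUnion fun e => {w ∈ fᶜ | insert w e ∉ G}
  have hspoilers : #spoilers ≤ 3 * t := by
    calc #spoilers ≤ #(f.powersetCard 2) * t := by
          refine card_biUnion_le_card_mul _ _ _ fun e he => ?_
          rw [mem_powersetCard] at he
          exact (card_filter_insert_notMem_le_card_badTriplesOn he.2
            (disjoint_compl_left.mono_right he.1)).trans (hedges e he.1 he.2)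
      _ = 3 * t := by rw [card_powersetCard, hf]; rfl
  have hcompl : #fᶜ = n - 3 := by rw [card_compl, Fintype.card_fin, hf]
  obtain ⟨w, hw, hw'⟩ := exists_mem_notMem_of_card_lt_card (s := spoilers) (t := fᶜ) (by omega)
  refine ⟨w, mem_compl.1 hw, fun e he => ?_⟩
  by_contra hbad
  exact hw' (mem_biUnion.2 ⟨e, he, mem_filter.2 ⟨hw, hbad⟩⟩)

theorem TetraClosed.mem_of_forall_card_badTriplesOn_le (hG : TetraClosed G) {t : ℕ}
    (hn : n > 3 + 3 * t) {f : Finset (Fin n)} (hf : #f = 3)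
    (hedges : ∀ e ⊆ f, #e = 2 → #(badTriplesOn G e) ≤ t) : f ∈ G :=
  have ⟨_, hw, hgood⟩ := exists_forall_insert_mem_of_card_badTriplesOn_le hn hf hedges
  hG.mem_of_forall_insert_mem hf hw hgood

section Core

variable (G) (t s : ℕ)

def sBadVertices : Finset (Fin n) :=
  {v | s < badEdgeDegree G t v}

def tBadEdgesOfSGood : Finset (Finset (Fin n)) :=
  {e ∈ tBadEdges G t | ∀ v ∈ e, badEdgeDegree G t v ≤ s}

def goodCore : Finset (Fin n) :=
  (sBadVertices G t s ∪ (tBadEdgesOfSGood G t s).biUnion id)ᶜ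

theorem card_badTriplesOn_le_of_subset_goodCore {e : Finset (Fin n)}
    (heW : e ⊆ goodCore G t s) (he : #e = 2) : #(badTriplesOn G e) ≤ t := by
  have hcore : ∀ v ∈ e, badEdgeDegree G t v ≤ s ∧ ∀ e' ∈ tBadEdgesOfSGood G t s, v ∉ e' := by
    intro v hv
    simpa [goodCore, sBadVertices] using heW hv
  by_contra! hbad
  have heE : e ∈ tBadEdgesOfSGood G t s :=
    mem_filter.2 ⟨mem_filter.2 ⟨mem_powersetCard.2 ⟨subset_univ e, he⟩, hbad⟩,
      fun v hv => (hcore v hv).1⟩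
  obtain ⟨v, hv⟩ := card_pos.1 (he ▸ two_pos : 0 < #e)
  exact (hcore v hv).2 e heE hv

theorem le_card_goodCore :
    n - #(sBadVertices G t s) - 2 * #(tBadEdgesOfSGood G t s) ≤ #(goodCore G t s) := by
  have hends : #((tBadEdgesOfSGood G t s).biUnion id) ≤ 2 * #(tBadEdgesOfSGood G t s) := by
    rw [mul_comm]
    refine card_biUnion_le_card_mul _ _ _ fun e he => ?_
    exact (mem_powersetCard.1 (mem_filter.1 (mem_filter.1 he).1).1).2.le
  have hunion := card_union_le (sBadVertices G t s) ((tBadEdgesOfSGood G t s).biUnion id)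
  rw [goodCore, card_compl, Fintype.card_fin]
  omega

end Core

theorem exists_good_core_general (n t s a b : ℕ) (G : Finset (Finset (Fin n)))
    (hG : TetraClosed G)
    (hn : n > 3 + 3 * t)
    (ha : ((Finset.univ : Finset (Fin n)).filter
        (fun v => s < badEdgeDegree G t v)).card ≤ a)
    (hb : ((tBadEdges G t).filter
        (fun e => ∀ v ∈ e, badEdgeDegree G t v ≤ s)).card ≤ b) :
    ∃ W : Finset (Fin n), n - a - 2 * b ≤ W.card ∧
      ∀ f ⊆ W, f.card = 3 → f ∈ G := by
  refine ⟨goodCore G t s, ?_, fun f hfW hf => hG.mem_of_forall_card_badTriplesOn_le hn hf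
    fun e he he2 => card_badTriplesOn_le_of_subset_goodCore G t s (he.trans hfW) he2⟩
  have hcore := le_card_goodCore G t s
  rw [sBadVertices, tBadEdgesOfSGood] at hcore
  omega

/-- Corollary 3.6 (deterministic content): if `n > 3 + 3t`, `G` is
tetra-closed, there are at most `a` `s`-bad vertices and at most `b` `t`-bad
edges both of whose endpoints are `s`-good, then there is a subset `W` of
`Fin n` with `|W| ≥ n − a − 2b` all of whose triples belong to `G`. -/
theorem exists_good_core (n t s a b : ℕ) (G : Finset (Finset (Fin n)))
    (hGtriples : ∀ f ∈ G, f.card = 3) (hG : TetraClosed G)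
    (hn : n > 3 + 3 * t)
    (ha : ((Finset.univ : Finset (Fin n)).filter
        (fun v => s < badEdgeDegree G t v)).card ≤ a)
    (hb : ((tBadEdges G t).filter
        (fun e => ∀ v ∈ e, badEdgeDegree G t v ≤ s)).card ≤ b) :
    ∃ W : Finset (Fin n), n - a - 2 * b ≤ W.card ∧
      ∀ f ⊆ W, f.card = 3 → f ∈ G :=
  exists_good_core_general n t s a b G hG hn ha hb
end

section
/- Fix n ∈ ℕ and m ≥ 1. The number of sets E of m edges of Fin n such that the graph whose vertex set is the set of endpoints of edges of E and whose edge set is E is connected, is at most n²·(2mn)^{m−1}. -/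
/-! Every connected set of `m` edges arises by choosing one edge and then, `m - 1` times, an
edge with an endpoint already covered: grow it greedily, since a walk from a covered vertex to
an uncovered one crosses an edge attached to the part chosen so far. There are `n²` choices for
the first edge and at most `2m · n` (a covered endpoint, then any second endpoint) for each
further one. -/

/-- The graph associated with a set `E` of edges (2-element subsets) of
`Fin n`: distinct `x` and `y` are adjacent if and only if `{x, y} ∈ E`. -/
def edgeGraph {n : ℕ} (E : Finset (Finset (Fin n))) : SimpleGraph (Fin n) where
  Adj x y := x ≠ y ∧ ({x, y} : Finset (Fin n)) ∈ E
  symm := by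
    constructor
    rintro x y ⟨hxy, he⟩
    exact ⟨hxy.symm, by rwa [Finset.pair_comm]⟩
  loopless := by constructor; rintro x ⟨h, -⟩; exact h rfl

open Finset

section Counting

variable {α : Type*} [DecidableEq α]

def coveredVertices (E : Finset (Finset α)) : Finset α := E.biUnion id

lemma mem_coveredVertices {E : Finset (Finset α)} {v : α} :
    v ∈ coveredVertices E ↔ ∃ e ∈ E, v ∈ e := by
  simp [coveredVertices]

variable [Fintype α]

/-- `k` edges `{v, w}` with `v` covered are added to a first edge. Repetitions and degenerate
edges `{v, v}` are allowed: they only enlarge the family. -/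
def grownEdgeSets : ℕ → Finset (Finset (Finset α))
  | 0 => (univ ×ˢ univ).image fun p : α × α => {{p.1, p.2}}
  | k + 1 => (grownEdgeSets k).biUnion fun E =>
      (coveredVertices E ×ˢ univ).image fun p : α × α => insert {p.1, p.2} E

lemma insert_mem_grownEdgeSets {k : ℕ} {F : Finset (Finset α)} (hF : F ∈ grownEdgeSets k)
    {v w : α} (hv : v ∈ coveredVertices F) : insert {v, w} F ∈ grownEdgeSets (k + 1) :=
  mem_biUnion.mpr ⟨F, hF, mem_image.mpr ⟨(v, w), mem_product.mpr ⟨hv, mem_univ w⟩, rfl⟩⟩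

lemma card_coveredVertices_le_of_mem_grownEdgeSets {k : ℕ} {E : Finset (Finset α)}
    (hE : E ∈ grownEdgeSets k) : #(coveredVertices E) ≤ 2 * (k + 1) := by
  induction k generalizing E with
  | zero =>
    obtain ⟨⟨v, w⟩, -, rfl⟩ := mem_image.mp hE
    simpa [coveredVertices] using card_le_two
  | succ k ih =>
    obtain ⟨F, hF, hEF⟩ := mem_biUnion.mp hE
    obtain ⟨⟨v, w⟩, -, rfl⟩ := mem_image.mp hEF
    calc #(coveredVertices (insert {v, w} F))
        = #({v, w} ∪ coveredVertices F) := by simp [coveredVertices, biUnion_insert]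
      _ ≤ 2 + 2 * (k + 1) := (card_union_le _ _).trans (add_le_add card_le_two (ih hF))
      _ = 2 * (k + 1 + 1) := by ring

lemma card_grownEdgeSets_le (k : ℕ) :
    #(grownEdgeSets (α := α) k) ≤
      Fintype.card α ^ 2 * (2 * (k + 1) * Fintype.card α) ^ k := by
  set n := Fintype.card α
  induction k with
  | zero =>
    calc #(grownEdgeSets (α := α) 0) ≤ #(univ ×ˢ univ : Finset (α × α)) := card_image_le
      _ = n ^ 2 * (2 * (0 + 1) * n) ^ 0 := by simp [sq, n]
  | succ k ih =>
    have hstep : ∀ E ∈ grownEdgeSets (α := α) k,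
        #((coveredVertices E ×ˢ univ).image fun p : α × α => insert {p.1, p.2} E) ≤
          2 * (k + 1) * n := fun E hE =>
      calc _ ≤ #(coveredVertices E ×ˢ (univ : Finset α)) := card_image_le
        _ = #(coveredVertices E) * n := by rw [card_product, card_univ]
        _ ≤ 2 * (k + 1) * n := by gcongr; exact card_coveredVertices_le_of_mem_grownEdgeSets hE
    calc #(grownEdgeSets (α := α) (k + 1))
        ≤ ∑ E ∈ grownEdgeSets (α := α) k, 2 * (k + 1) * n :=
          card_biUnion_le.trans (sum_le_sum hstep)
      _ = #(grownEdgeSets (α := α) k) * (2 * (k + 1) * n) := by rw [sum_const, smul_eq_mul]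
      _ ≤ n ^ 2 * (2 * (k + 1) * n) ^ k * (2 * (k + 1) * n) := by gcongr
      _ ≤ n ^ 2 * (2 * (k + 1 + 1) * n) ^ (k + 1) := by
          rw [mul_assoc, ← pow_succ]; gcongr; omega

end Counting

lemma exists_attached_edge {n : ℕ} {E F : Finset (Finset (Fin n))}
    (hconn : ∀ x y : Fin n, (∃ e ∈ E, x ∈ e) → (∃ e ∈ E, y ∈ e) →
      (edgeGraph E).Reachable x y)
    (hE : ∀ e ∈ E, e.card = 2) (hFE : F ⊆ E) (hF : F.Nonempty) {e' : Finset (Fin n)}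
    (he'E : e' ∈ E) (he'F : e' ∉ F) :
    ∃ e ∈ E, e ∉ F ∧ ∃ v ∈ e, v ∈ coveredVertices F := by
  obtain ⟨f, hf⟩ := hF
  obtain ⟨x, hx⟩ := card_pos.mp (by rw [hE f (hFE hf)]; omega : 0 < #f)
  obtain ⟨y, hy⟩ := card_pos.mp (by rw [hE e' he'E]; omega : 0 < #e')
  by_cases hyF : y ∈ coveredVertices F
  · exact ⟨e', he'E, he'F, y, hy, hyF⟩
  obtain ⟨p⟩ := hconn x y ⟨f, hFE hf, hx⟩ ⟨e', he'E, hy⟩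
  obtain ⟨d, -, hd₁, hd₂⟩ := p.exists_boundary_dart (coveredVertices F : Set (Fin n))
    (mem_coveredVertices.mpr ⟨f, hf, hx⟩) hyF
  refine ⟨{d.fst, d.snd}, d.adj.2, fun hdF => hd₂ ?_, d.fst, mem_insert_self _ _, hd₁⟩
  exact mem_coveredVertices.mpr ⟨_, hdF, mem_insert_of_mem (mem_singleton_self _)⟩

lemma mem_grownEdgeSets_of_connected {n k : ℕ} {E : Finset (Finset (Fin n))} (hcard : #E = k + 1)
    (hE : ∀ e ∈ E, e.card = 2)
    (hconn : ∀ x y : Fin n, (∃ e ∈ E, x ∈ e) → (∃ e ∈ E, y ∈ e) →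
      (edgeGraph E).Reachable x y) :
    E ∈ grownEdgeSets k := by
  suffices h : ∀ j ≤ k, ∃ F ⊆ E, #F = j + 1 ∧ F ∈ grownEdgeSets j by
    obtain ⟨F, hFE, hF, hFmem⟩ := h k le_rfl
    rwa [← eq_of_subset_of_card_le hFE (by omega)]
  intro j hj
  induction j with
  | zero =>
    obtain ⟨e, he⟩ := card_pos.mp (by omega : 0 < #E)
    obtain ⟨v, w, -, rfl⟩ := card_eq_two.mp (hE e he)
    exact ⟨{{v, w}}, singleton_subset_iff.mpr he, card_singleton _,
      mem_image.mpr ⟨(v, w), mem_univ _, rfl⟩⟩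
  | succ j ih =>
    obtain ⟨F, hFE, hF, hFmem⟩ := ih (by omega)
    obtain ⟨e', he'E, he'F⟩ := not_subset.mp fun hEF : E ⊆ F => by
      have := card_le_card hEF; omega
    obtain ⟨e, heE, heF, v, hve, hv⟩ :=
      exists_attached_edge hconn hE hFE (card_pos.mp (by omega)) he'E he'F
    obtain ⟨w, rfl⟩ : ∃ w, e = {v, w} := by
      obtain ⟨a, b, -, rfl⟩ := card_eq_two.mp (hE e heE)
      rcases mem_insert.mp hve with rfl | hvb
      exacts [⟨b, rfl⟩, ⟨a, by rw [mem_singleton.mp hvb, pair_comm]⟩]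
    exact ⟨insert {v, w} F, insert_subset heE hFE, by rw [card_insert_of_notMem heF, hF],
      insert_mem_grownEdgeSets hFmem hv⟩

/-- The enumeration of connected edge-sets used in the proof of Lemma 3.1:
for `m ≥ 1`, the number of sets `E` of `m` edges of `Fin n` such that the
graph whose vertices are the endpoints of edges of `E` and whose edges are
the members of `E` is connected, is at most `n² (2mn)^{m−1}`. -/
theorem count_connected_edge_sets (n m : ℕ) (hm : 1 ≤ m) :
    Set.ncard {E : Finset (Finset (Fin n)) |
        E.card = m ∧ (∀ e ∈ E, e.card = 2) ∧
        ∀ x y : Fin n, (∃ e ∈ E, x ∈ e) → (∃ e ∈ E, y ∈ e) →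
          (edgeGraph E).Reachable x y} ≤
      n ^ 2 * (2 * m * n) ^ (m - 1) := by
  obtain ⟨k, rfl⟩ : ∃ k, m = k + 1 := ⟨m - 1, by omega⟩
  calc _ ≤ #(grownEdgeSets (α := Fin n) k) := by
        rw [← Set.ncard_coe_finset]
        exact Set.ncard_le_ncard (fun _ hE => mem_grownEdgeSets_of_connected hE.1 hE.2.1 hE.2.2)
    _ ≤ n ^ 2 * (2 * (k + 1) * n) ^ k := by
        simpa using card_grownEdgeSets_le (α := Fin n) k
    _ = _ := by simp
end
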